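/- In Γ_p = T^{p-1} ⋊_ρ C_p, the normaliser of the subgroup C_p = ⟨a⟩ equals the internal direct product Z(Γ_p) × C_p, where Z(Γ_p) is the centre of Γ_p. -/

import Mathlib

/-!
Write `Γ = N ⋊[φ] G` with `N` and `G` abelian. Conjugating `inr g` by `x` gives
`inl (x.left * (φ g x.left)⁻¹) * inr g`, so `x` normalises `inr(G)` exactly when `x.left` is fixed
by every `φ g`; such an `inl x.left` is central, and `x = inl x.left * inr x.right`. A central
element commutes with all of `inl(N)`, so its `G`-component acts trivially, and it is trivial
when `φ` is faithful. For `G = C_p` faithfulness only needs `ρ ≠ id`, since the kernel of `φ`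
is a subgroup of a group of prime order.
-/

open Subgroup

namespace SemidirectProduct

section

variable {N G : Type*} [Group N] [Group G] {φ : G →* MulAut N}

theorem mem_range_inr_iff {x : N ⋊[φ] G} : x ∈ (inr : G →* N ⋊[φ] G).range ↔ x.left = 1 :=
  ⟨by rintro ⟨g, rfl⟩; rfl, fun h => ⟨x.right, by ext <;> simp [h]⟩⟩

theorem left_mul_inr_mul_inv (x : N ⋊[φ] G) (g : G) :
    (x * inr g * x⁻¹).left = x.left * φ (x.right * g * x.right⁻¹) x.left⁻¹ := by
  simp [mul_left, inv_left, map_mul, MulAut.mul_apply]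

theorem zpowers_inr_eq_range {g : G} (hg : zpowers g = ⊤) :
    zpowers (inr g : N ⋊[φ] G) = (inr : G →* N ⋊[φ] G).range := by
  rw [← MonoidHom.map_zpowers, hg, MonoidHom.range_eq_map]

end

section

variable {N G : Type*} [Group N] [CommGroup G] {φ : G →* MulAut N}

theorem map_left_eq_of_mem_normalizer_range_inr {x : N ⋊[φ] G}
    (hx : x ∈ normalizer ((inr : G →* N ⋊[φ] G).range : Set (N ⋊[φ] G))) (g : G) :
    φ g x.left = x.left := by
  have h := (hx (inr g)).1 ⟨g, rfl⟩
  rw [SetLike.mem_coe, mem_range_inr_iff, left_mul_inr_mul_inv, mul_inv_cancel_comm, map_inv,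
    mul_inv_eq_one] at h
  exact h.symm

end

section

variable {N G : Type*} [CommGroup N] [Group G] {φ : G →* MulAut N}

theorem inl_mem_center {n : N} (hn : ∀ g, φ g n = n) : (inl n : N ⋊[φ] G) ∈ center (N ⋊[φ] G) :=
  mem_center_iff.2 fun y => by
    ext
    · simp [hn, mul_comm]
    · simp

theorem right_eq_one_of_mem_center (hφ : Function.Injective φ) {x : N ⋊[φ] G}
    (hx : x ∈ center (N ⋊[φ] G)) : x.right = 1 :=
  hφ <| MulEquiv.ext fun s => by
    have h := congrArg left (mem_center_iff.1 hx (inl s))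
    simp only [mul_left, left_inl, right_inl, map_one, MulAut.one_apply] at h
    simpa using mul_left_cancel (h.symm.trans (mul_comm _ _))

theorem center_inf_range_inr_eq_bot (hφ : Function.Injective φ) :
    center (N ⋊[φ] G) ⊓ (inr : G →* N ⋊[φ] G).range = ⊥ :=
  eq_bot_iff.2 fun x ⟨hc, hr⟩ => by
    ext
    · exact mem_range_inr_iff.1 hr
    · exact right_eq_one_of_mem_center hφ hc

end

theorem normalizer_range_inr_eq_center_sup {N G : Type*} [CommGroup N] [CommGroup G]
    (φ : G →* MulAut N) :
    normalizer ((inr : G →* N ⋊[φ] G).range : Set (N ⋊[φ] G)) =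
      center (N ⋊[φ] G) ⊔ (inr : G →* N ⋊[φ] G).range := by
  refine le_antisymm (fun x hx => ?_) (sup_le (center_le_normalizer _) le_normalizer)
  rw [← inl_left_mul_inr_right x]
  exact mul_mem (mem_sup_left (inl_mem_center (map_left_eq_of_mem_normalizer_range_inr hx)))
    (mem_sup_right ⟨x.right, rfl⟩)

end SemidirectProduct

theorem MonoidHom.injective_of_map_ne_one_of_prime_card {G M : Type*} [Group G] [Group M]
    [Fact (Nat.card G).Prime] (f : G →* M) {g : G} (hg : f g ≠ 1) : Function.Injective f := by
  rw [← ker_eq_bot_iff]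
  refine f.ker.eq_bot_or_eq_top_of_prime_card.resolve_right fun h => hg ?_
  exact mem_ker.1 (h ▸ mem_top g)

theorem Circle.exists_inv_ne : ∃ z : Circle, z⁻¹ ≠ z := by
  refine ⟨Circle.exp (Real.pi / 2), fun h => Complex.I_ne_zero ?_⟩
  have := congrArg ((↑) : Circle → ℂ) h
  simp only [coe_inv, coe_exp, Complex.ofReal_div, Complex.ofReal_ofNat,
    Complex.exp_pi_div_two_mul_I, Complex.inv_I] at this
  linear_combination (-1 / 2 : ℂ) * this

open SemidirectProduct in
/-- In `Γ_p = T^{p-1} ⋊_ρ C_p` (the generator `a` of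
`C_p = Multiplicative (ZMod p)` acting on `T^{p-1} = Fin (p-1) → Circle` by
`ρ(a)(t_1, …, t_{p-1}) = (t_{p-1}⁻¹, t_1 t_{p-1}⁻¹, …, t_{p-2} t_{p-1}⁻¹)`),
the normaliser of the subgroup `C_p = ⟨a⟩` is the internal direct product
`Z(Γ_p) × C_p`: it equals `Z(Γ_p) ⊔ ⟨a⟩` and `Z(Γ_p) ⊓ ⟨a⟩ = ⊥` (the two factors
commute automatically since one of them is the centre). -/
theorem stmt_5 (p : ℕ) (hp : p.Prime)
    (φ : Multiplicative (ZMod p) →* MulAut (Fin (p - 1) → Circle))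
    (hφ : ∀ (t : Fin (p - 1) → Circle) (i : Fin (p - 1)),
      φ (Multiplicative.ofAdd (1 : ZMod p)) t i =
        if (i : ℕ) = 0 then (t ⟨p - 2, by have := i.isLt; omega⟩)⁻¹
        else t ⟨(i : ℕ) - 1, by have := i.isLt; omega⟩ * (t ⟨p - 2, by have := i.isLt; omega⟩)⁻¹)
    (Cp : Subgroup (SemidirectProduct (Fin (p - 1) → Circle) (Multiplicative (ZMod p)) φ))
    (hCp : Cp = Subgroup.zpowers (⟨1, Multiplicative.ofAdd (1 : ZMod p)⟩ :
      SemidirectProduct (Fin (p - 1) → Circle) (Multiplicative (ZMod p)) φ)) :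
    Subgroup.normalizer (Cp : Set (SemidirectProduct (Fin (p - 1) → Circle) (Multiplicative (ZMod p)) φ)) =
      Subgroup.center (SemidirectProduct (Fin (p - 1) → Circle) (Multiplicative (ZMod p)) φ) ⊔ Cp
    ∧ Subgroup.center (SemidirectProduct (Fin (p - 1) → Circle) (Multiplicative (ZMod p)) φ) ⊓ Cp
        = ⊥ := by
  have : Fact p.Prime := ⟨hp⟩
  have hcard : Nat.card (Multiplicative (ZMod p)) = p := by
    rw [Nat.card_eq_fintype_card, Fintype.card_multiplicative, ZMod.card]
  have : Fact (Nat.card (Multiplicative (ZMod p))).Prime := ⟨hcard.symm ▸ hp⟩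
  have ha : Multiplicative.ofAdd (1 : ZMod p) ≠ 1 := by simp
  have hρ : φ (Multiplicative.ofAdd 1) ≠ 1 := fun h => by
    obtain ⟨z, hz⟩ := Circle.exists_inv_ne
    have h0 := hφ (fun _ => z) ⟨0, by have := hp.two_le; omega⟩
    simp only [h, MulAut.one_apply, ↓reduceIte] at h0
    exact hz h0.symm
  have hCp_range : Cp = (inr : _ →* SemidirectProduct (Fin (p - 1) → Circle) _ φ).range :=
    hCp.trans (zpowers_inr_eq_range (zpowers_eq_top_of_prime_card hcard ha))
  subst hCp_range
  exact ⟨normalizer_range_inr_eq_center_sup φ,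
    center_inf_range_inr_eq_bot (φ.injective_of_map_ne_one_of_prime_card hρ)⟩
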